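/- Let G' with list assignment L be any graph obtained from a graph G by the NP-hardness construction (with any choice of (a,b)-forbidding paths of length six). Let γ be an L-coloring of G' and let uv ∈ E(G). If γ(u) = γ(v), then γ(z_uv) = 4. -/

import Mathlib

/-- An `L`-coloring of `G`: every vertex gets a color from its list, and adjacent
vertices get different colors. -/
def IsLColoring {V : Type*} (G : SimpleGraph V) (L : V → Finset ℕ) (γ : V → ℕ) : Prop :=
  (∀ v, γ v ∈ L v) ∧ ∀ u v, G.Adj u v → γ u ≠ γ v

/-- An `L`-recoloring sequence `seq 0, …, seq ℓ` from `α` to `β`: all are `L`-colorings,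
and consecutive colorings differ on at most one vertex. -/
def IsLRecolSeq {V : Type*} (G : SimpleGraph V) (L : V → Finset ℕ) (seq : ℕ → V → ℕ)
    (ℓ : ℕ) (α β : V → ℕ) : Prop :=
  seq 0 = α ∧ seq ℓ = β ∧ (∀ i ≤ ℓ, IsLColoring G L (seq i)) ∧
  ∀ i < ℓ, ∀ u w, seq i u ≠ seq (i+1) u → seq i w ≠ seq (i+1) w → u = w

/-- The path `w_0, w_1, …, w_6` of length six. -/
def PathG7 : SimpleGraph (Fin 7) where
  Adj i j := i.val + 1 = j.val ∨ j.val + 1 = i.val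
  symm := ⟨fun _ _ h => h.symm⟩
  loopless := ⟨fun i h => by rcases h with h | h <;> omega⟩

/-- An `(a,b)`-forbidding path of length six, with end vertices `w_0 = u` and `w_6 = v`:
all lists are contained in `{1,2,3,4}`; a pair `(x,y) ∈ L(u) × L(v)` is realized by some
`L`-coloring iff `x ≠ a` or `y ≠ b` (such pairs are admissible); and from any `L`-coloring
`γ` and admissible pair `(x,y)` with `x = γ(u)` or `y = γ(v)`, one can `L`-recolor to a
coloring `δ` with `δ(u) = x`, `δ(v) = y`, recoloring every internal vertex at most once
and not recoloring `u` and `v` until the last step. -/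
def IsForbiddingPath (L : Fin 7 → Finset ℕ) (a b : ℕ) : Prop :=
  (∀ w, L w ⊆ ({1, 2, 3, 4} : Finset ℕ)) ∧
  (∀ x ∈ L 0, ∀ y ∈ L 6,
    ((x ≠ a ∨ y ≠ b) ↔ ∃ γ, IsLColoring PathG7 L γ ∧ γ 0 = x ∧ γ 6 = y)) ∧
  (∀ γ, IsLColoring PathG7 L γ → ∀ x ∈ L 0, ∀ y ∈ L 6, (x ≠ a ∨ y ≠ b) →
    (x = γ 0 ∨ y = γ 6) →
    ∃ ℓ seq δ, IsLRecolSeq PathG7 L seq ℓ γ δ ∧ δ 0 = x ∧ δ 6 = y ∧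
      (∀ w : Fin 7, w ≠ 0 → w ≠ 6 →
        ((Finset.range ℓ).filter (fun i => seq i w ≠ seq (i+1) w)).card ≤ 1) ∧
      (∀ i < ℓ, seq i 0 = γ 0 ∧ seq i 6 = γ 6))

/-- Vertices of the graph `G'` of the NP-hardness construction, built from a graph on
`Fin N` (edges of `G` are oriented as pairs `(u,v)` with `u < v`): `orig w` are the
original vertices; `x u v`, `y u v`, `z u v` are the gadget vertices `x_uv`, `y_uv`,
`z_uv`; `p j u v s` is the `s`-th internal vertex (`s ∈ {0,…,4}`) of the `j`-th
forbidding path (`j ∈ {0,…,7}`) of the gadget of edge `uv`; `A`, `B`, `C`, `D` are the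
four special vertices `a`, `b`, `c`, `d`. -/
inductive NPV (N : ℕ) : Type
  | orig : Fin N → NPV N
  | x : Fin N → Fin N → NPV N
  | y : Fin N → Fin N → NPV N
  | z : Fin N → Fin N → NPV N
  | p : Fin 8 → Fin N → Fin N → Fin 5 → NPV N
  | A : NPV N
  | B : NPV N
  | C : NPV N
  | D : NPV N
deriving DecidableEq

/-- Oriented edges of `G`: `u < v` and `uv ∈ E(G)`. -/
def OEdge {N : ℕ} (G : SimpleGraph (Fin N)) (u v : Fin N) : Prop := G.Adj u v ∧ u < v

/-- Start vertex of the `j`-th forbidding path of the gadget of edge `uv`. -/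
def fpStart {N : ℕ} (u v : Fin N) : Fin 8 → NPV N :=
  ![.orig u, .orig u, .orig u, .orig v, .orig v, .orig v, .x u v, .y u v]

/-- End vertex of the `j`-th forbidding path of the gadget of edge `uv`. -/
def fpEnd {N : ℕ} (u v : Fin N) : Fin 8 → NPV N :=
  ![.x u v, .x u v, .y u v, .x u v, .x u v, .y u v, .z u v, .z u v]

/-- The forbidden pair `(a,b)` of the `j`-th forbidding path of a gadget: a
`(1,2)`-, `(3,1)`-forbidding path from `u` to `x_uv`, a `(2,3)`-forbidding path from `u`
to `y_uv`, a `(2,1)`-, `(3,2)`-forbidding path from `v` to `x_uv`, a `(1,3)`-forbidding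
path from `v` to `y_uv`, a `(4,1)`-forbidding path from `x_uv` to `z_uv`, and a
`(4,2)`-forbidding path from `y_uv` to `z_uv`. -/
def fpPair : Fin 8 → ℕ × ℕ :=
  ![(1, 2), (3, 1), (2, 3), (2, 1), (3, 2), (1, 3), (4, 1), (4, 2)]

/-- Base (asymmetric) adjacency relation of `G'`: direct edges `u x_uv`, `u y_uv`;
the edges of the forbidding paths; all edges among `{a,b,c,d}` except `cd`;
and all edges from `Z` to `c`. -/
def NPRel {N : ℕ} (G : SimpleGraph (Fin N)) : NPV N → NPV N → Prop := fun w w' =>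
  (∃ u v, OEdge G u v ∧ w = .orig u ∧ (w' = .x u v ∨ w' = .y u v)) ∨
  (∃ u v j, OEdge G u v ∧ w = fpStart u v j ∧ w' = .p j u v 0) ∨
  (∃ u v j, ∃ s s' : Fin 5, OEdge G u v ∧ s'.val = s.val + 1 ∧
    w = .p j u v s ∧ w' = .p j u v s') ∨
  (∃ u v j, OEdge G u v ∧ w = .p j u v 4 ∧ w' = fpEnd u v j) ∨
  (w = .A ∧ (w' = .B ∨ w' = .C ∨ w' = .D)) ∨
  (w = .B ∧ (w' = .C ∨ w' = .D)) ∨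
  (∃ u v, OEdge G u v ∧ w = .z u v ∧ w' = .C)

/-- The graph `G'` of the NP-hardness construction. -/
def NPGraph {N : ℕ} (G : SimpleGraph (Fin N)) : SimpleGraph (NPV N) where
  Adj w w' := w ≠ w' ∧ (NPRel G w w' ∨ NPRel G w' w)
  symm := ⟨fun w w' h => ⟨h.1.symm, h.2.symm⟩⟩
  loopless := ⟨fun w h => h.1 rfl⟩

/-- The list assignment of `G'`, given the (arbitrary) lists `Lp` on the internal
vertices of the forbidding paths: `L(u) = {1,2,3}` for original vertices,
`L(x_uv) = {1,2,4}`, `L(y_uv) = {3,4}`, `L(z_uv) = {1,2,4}`, `L(a) = {1,2,3}`,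
`L(b) = {1,2}`, `L(c) = {3,4}`, `L(d) = {4}`. -/
def NPLists {N : ℕ} (Lp : Fin 8 → Fin N → Fin N → Fin 5 → Finset ℕ) :
    NPV N → Finset ℕ
  | .orig _ => {1, 2, 3}
  | .x _ _ => {1, 2, 4}
  | .y _ _ => {3, 4}
  | .z _ _ => {1, 2, 4}
  | .p j u v s => Lp j u v s
  | .A => {1, 2, 3}
  | .B => {1, 2}
  | .C => {3, 4}
  | .D => {4}

/-- The lists along the `j`-th forbidding path of the gadget of edge `uv`, viewed as a
standalone path of length six. -/
def gadgetPathLists {N : ℕ} (Lp : Fin 8 → Fin N → Fin N → Fin 5 → Finset ℕ)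
    (j : Fin 8) (u v : Fin N) : Fin 7 → Finset ℕ :=
  ![NPLists Lp (fpStart u v j), Lp j u v 0, Lp j u v 1, Lp j u v 2, Lp j u v 3,
    Lp j u v 4, NPLists Lp (fpEnd u v j)]

/-- The internal lists `Lp` are a valid choice for the construction: each gadget path is
an `(a,b)`-forbidding path of length six for its prescribed pair `(a,b)`. -/
def NPGoodLists {N : ℕ} (G : SimpleGraph (Fin N))
    (Lp : Fin 8 → Fin N → Fin N → Fin 5 → Finset ℕ) : Prop :=
  ∀ u v, OEdge G u v → ∀ j : Fin 8,
    IsForbiddingPath (gadgetPathLists Lp j u v) (fpPair j).1 (fpPair j).2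

/-! Let `u` and `v` share the colour `c ∈ {1,2,3}`. Adjacency to `u` keeps `x_uv` off `c`, and
the forbidding paths from `u` and `v` to `x_uv` whose forbidden pair starts with `c` exclude the
other colours of `{1,2}`, so `x_uv` gets `4`; the same reasoning with `{3}` forces `y_uv` to
get `4`. Then the `(4,1)`- and `(4,2)`-forbidding paths rule out colours `1` and `2` at `z_uv`. -/

theorem IsLColoring.comp_hom {V W : Type*} {G : SimpleGraph V} {H : SimpleGraph W}
    {L : V → Finset ℕ} {γ : V → ℕ} (hγ : IsLColoring G L γ) (φ : H →g G) :
    IsLColoring H (L ∘ φ) (γ ∘ φ) :=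
  ⟨fun w => hγ.1 (φ w), fun _ _ h => hγ.2 _ _ (φ.map_adj h)⟩

def PathG7.homOfAdjSucc {V : Type*} {G : SimpleGraph V} (f : Fin 7 → V)
    (hf : ∀ i : Fin 6, G.Adj (f i.castSucc) (f i.succ)) : PathG7 →g G where
  toFun := f
  map_rel' := by
    have step : ∀ a b : Fin 7, a.val + 1 = b.val → G.Adj (f a) (f b) := by
      intro a b hab
      obtain ⟨i, rfl⟩ : ∃ i : Fin 6, i.castSucc = a := ⟨⟨a, by omega⟩, rfl⟩
      obtain rfl : b = i.succ := Fin.ext (by simp [← hab])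
      exact hf i
    rintro a b (hab | hba)
    · exact step a b hab
    · exact (step b a hba).symm

theorem IsForbiddingPath.not_forbidden {L : Fin 7 → Finset ℕ} {a b : ℕ}
    (hP : IsForbiddingPath L a b) {γ : Fin 7 → ℕ} (hγ : IsLColoring PathG7 L γ) :
    γ 0 ≠ a ∨ γ 6 ≠ b :=
  (hP.2.1 _ (hγ.1 0) _ (hγ.1 6)).mpr ⟨γ, hγ, rfl, rfl⟩

namespace NPGraph

variable {N : ℕ} {G : SimpleGraph (Fin N)} {u v : Fin N}

def gadgetPath (u v : Fin N) (j : Fin 8) : Fin 7 → NPV N :=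
  ![fpStart u v j, .p j u v 0, .p j u v 1, .p j u v 2, .p j u v 3, .p j u v 4, fpEnd u v j]

theorem adj_orig_x (huv : OEdge G u v) : (NPGraph G).Adj (.orig u) (.x u v) :=
  ⟨by simp, Or.inl (Or.inl ⟨u, v, huv, rfl, Or.inl rfl⟩)⟩

theorem adj_orig_y (huv : OEdge G u v) : (NPGraph G).Adj (.orig u) (.y u v) :=
  ⟨by simp, Or.inl (Or.inl ⟨u, v, huv, rfl, Or.inr rfl⟩)⟩

theorem adj_gadgetPath_succ (huv : OEdge G u v) (j : Fin 8) (i : Fin 6) :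
    (NPGraph G).Adj (gadgetPath u v j i.castSucc) (gadgetPath u v j i.succ) := by
  have internal : ∀ s s' : Fin 5, s'.val = s.val + 1 →
      (NPGraph G).Adj (.p j u v s) (.p j u v s') := fun s s' hs =>
    ⟨fun he => by injection he; omega,
      Or.inl (Or.inr (Or.inr (Or.inl ⟨u, v, j, s, s', huv, hs, rfl, rfl⟩)))⟩
  fin_cases i
  · exact ⟨by fin_cases j <;> simp [gadgetPath, fpStart],
      Or.inl (Or.inr (Or.inl ⟨u, v, j, huv, rfl, rfl⟩))⟩
  all_goals try exact internal _ _ rfl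
  exact ⟨by fin_cases j <;> simp [gadgetPath, fpEnd],
    Or.inl (Or.inr (Or.inr (Or.inr (Or.inl ⟨u, v, j, huv, rfl, rfl⟩))))⟩

def gadgetPathHom (huv : OEdge G u v) (j : Fin 8) : PathG7 →g NPGraph G :=
  PathG7.homOfAdjSucc (gadgetPath u v j) (adj_gadgetPath_succ huv j)

theorem gadgetPathLists_eq (Lp : Fin 8 → Fin N → Fin N → Fin 5 → Finset ℕ) (j : Fin 8) :
    gadgetPathLists Lp j u v = NPLists Lp ∘ gadgetPath u v j := by
  funext i
  fin_cases i <;> rfl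

variable {Lp : Fin 8 → Fin N → Fin N → Fin 5 → Finset ℕ} {γ : NPV N → ℕ}

theorem gadget_ends_not_forbidden (hLp : NPGoodLists G Lp)
    (hγ : IsLColoring (NPGraph G) (NPLists Lp) γ) (huv : OEdge G u v) (j : Fin 8) :
    γ (fpStart u v j) ≠ (fpPair j).1 ∨ γ (fpEnd u v j) ≠ (fpPair j).2 := by
  have hpath : IsLColoring PathG7 (gadgetPathLists Lp j u v) (γ ∘ gadgetPath u v j) := by
    rw [gadgetPathLists_eq]
    exact hγ.comp_hom (gadgetPathHom huv j)
  exact (hLp u v huv j).not_forbidden hpath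

theorem color_x_eq_four (hLp : NPGoodLists G Lp)
    (hγ : IsLColoring (NPGraph G) (NPLists Lp) γ) (huv : OEdge G u v)
    (heq : γ (.orig u) = γ (.orig v)) : γ (.x u v) = 4 := by
  have k0 := gadget_ends_not_forbidden hLp hγ huv 0
  have k1 := gadget_ends_not_forbidden hLp hγ huv 1
  have k3 := gadget_ends_not_forbidden hLp hγ huv 3
  have k4 := gadget_ends_not_forbidden hLp hγ huv 4
  have hux := hγ.2 _ _ (adj_orig_x huv)
  have mu := hγ.1 (.orig u)
  have mx := hγ.1 (.x u v)
  simp only [fpStart, fpEnd, fpPair, NPLists, Finset.mem_insert, Finset.mem_singleton,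
    Matrix.cons_val] at k0 k1 k3 k4 hux mu mx
  omega

theorem color_y_eq_four (hLp : NPGoodLists G Lp)
    (hγ : IsLColoring (NPGraph G) (NPLists Lp) γ) (huv : OEdge G u v)
    (heq : γ (.orig u) = γ (.orig v)) : γ (.y u v) = 4 := by
  have k2 := gadget_ends_not_forbidden hLp hγ huv 2
  have k5 := gadget_ends_not_forbidden hLp hγ huv 5
  have huy := hγ.2 _ _ (adj_orig_y huv)
  have mu := hγ.1 (.orig u)
  have my := hγ.1 (.y u v)
  simp only [fpStart, fpEnd, fpPair, NPLists, Finset.mem_insert, Finset.mem_singleton,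
    Matrix.cons_val] at k2 k5 huy mu my
  omega

end NPGraph

/-- For any `L`-coloring `γ` of `G'` and any edge `uv ∈ E(G)`:
if `γ(u) = γ(v)` then `γ(z_uv) = 4`. -/
theorem stmt_13 (N : ℕ) (G : SimpleGraph (Fin N))
    (Lp : Fin 8 → Fin N → Fin N → Fin 5 → Finset ℕ) (hLp : NPGoodLists G Lp)
    (γ : NPV N → ℕ) (hγ : IsLColoring (NPGraph G) (NPLists Lp) γ)
    (u v : Fin N) (huv : OEdge G u v) (heq : γ (.orig u) = γ (.orig v)) :
    γ (.z u v) = 4 := by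
  have hx := NPGraph.color_x_eq_four hLp hγ huv heq
  have hy := NPGraph.color_y_eq_four hLp hγ huv heq
  have k6 := NPGraph.gadget_ends_not_forbidden hLp hγ huv 6
  have k7 := NPGraph.gadget_ends_not_forbidden hLp hγ huv 7
  have mz := hγ.1 (.z u v)
  simp only [fpStart, fpEnd, fpPair, NPLists, Finset.mem_insert, Finset.mem_singleton,
    Matrix.cons_val] at k6 k7 mz
  omega
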